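/- Geometric disjointness in the tree selection: let i < j be indices in {1,2,3} and let 𝐓 be a collection of i-trees with tops, selected so that: (a) the trees were selected greedily with tops P_T maximal in the tile order in coordinate i and with frequency center ξ_{P_{T,i}} maximal among available tops at the time of selection, and (b) whenever a tree T with top P^0 is selected, all quartiles P with P_j < P^0_j are also removed from the remaining collection. Then the tiles {P_j : P ∈ T for some T ∈ 𝐓} are pairwise disjoint. -/

import Mathlib

/-!
If `P_j` and `P'_j` meet but differ, they live at different scales, say `|I_P| < |I_{P'}|`.
Since scales differ by a factor at least `4`, the frequency interval `ω_{P_j}` then contains the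
whole frequency interval of the quartile `P'`, hence the centre `ξ` of the `i`-tile of the top of
the tree of `P'` lies above `ω_{P_i}`, which contains the centre of the `i`-tile of the top of the
tree of `P` (here `i < j` is used). By greedy maximality the tree of `P'` was selected first, and
`P_j` lies strictly below the `j`-tile of its top, so `P` would have been removed.
-/

open MeasureTheory Set

/-- The Walsh functions `w_l : ℝ → ℝ`, defined recursively by
`w_0 = χ_{[0,1)}`, `w_{2l}(x) = w_l(2x) + w_l(2x−1)`,
`w_{2l+1}(x) = w_l(2x) − w_l(2x−1)`. -/
noncomputable def walsh : ℕ → ℝ → ℝ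
  | 0, x => if x ∈ Set.Ico (0:ℝ) 1 then 1 else 0
  | (n+1), x =>
      if (n+1) % 2 = 0 then walsh ((n+1)/2) (2*x) + walsh ((n+1)/2) (2*x - 1)
      else walsh ((n+1)/2) (2*x) - walsh ((n+1)/2) (2*x - 1)
  decreasing_by all_goals exact Nat.div_lt_self (Nat.succ_pos n) one_lt_two

/-- A tile `[2^{-k}n, 2^{-k}(n+1)) × [2^k l, 2^k(l+1))`:
a half-open dyadic rectangle of area one. -/
structure Tile where
  k : ℤ
  n : ℤ
  l : ℤ
deriving DecidableEq

namespace Tile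

/-- The time interval `I_P = [2^{-k}n, 2^{-k}(n+1))` of a tile. -/
noncomputable def I (p : Tile) : Set ℝ := Set.Ico ((2:ℝ)^(-p.k) * p.n) ((2:ℝ)^(-p.k) * (p.n+1))

/-- The frequency interval `ω_P = [2^k l, 2^k(l+1))` of a tile. -/
noncomputable def freq (p : Tile) : Set ℝ := Set.Ico ((2:ℝ)^(p.k) * p.l) ((2:ℝ)^(p.k) * (p.l+1))

/-- The tile as a subset `I_P × ω_P` of the time-frequency plane. -/
noncomputable def area (p : Tile) : Set (ℝ × ℝ) := p.I ×ˢ p.freq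

/-- The length `|I_P| = 2^{-k}` of the time interval of a tile. -/
noncomputable def len (p : Tile) : ℝ := (2:ℝ)^(-p.k)

/-- The center `ξ_P` of the frequency interval of a tile. -/
noncomputable def ξ (p : Tile) : ℝ := (2:ℝ)^(p.k) * ((p.l : ℝ) + 1/2)

/-- The tile order: `p < q` iff `I_p ⊊ I_q` and `ω_q ⊆ ω_p`. -/
def lt (p q : Tile) : Prop := p.I ⊂ q.I ∧ q.freq ⊆ p.freq

/-- `p ≤ q` iff `p < q` or `p = q`. -/
def le (p q : Tile) : Prop := Tile.lt p q ∨ p = q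

/-- The Walsh wave packet `φ_P(x) = 2^{k/2} w_l(2^k x − n)` of a tile. -/
noncomputable def wp (p : Tile) : ℝ → ℝ :=
  fun x => Real.sqrt ((2:ℝ)^(p.k)) * walsh p.l.toNat ((2:ℝ)^(p.k) * x - p.n)

end Tile

/-- A quartile `[2^{-k}n, 2^{-k}(n+1)) × [2^{k+2}l, 2^{k+2}(l+1))`:
a dyadic rectangle of area four. -/
structure Quartile where
  k : ℤ
  n : ℤ
  l : ℤ
deriving DecidableEq

namespace Quartile

/-- The time interval `I_P` of a quartile. -/
noncomputable def I (P : Quartile) : Set ℝ := Set.Ico ((2:ℝ)^(-P.k) * P.n) ((2:ℝ)^(-P.k) * (P.n+1))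

/-- The length `|I_P| = 2^{-k}` of the time interval of a quartile. -/
noncomputable def len (P : Quartile) : ℝ := (2:ℝ)^(-P.k)

/-- The `j`-th sub-tile `P_j = I_P × [2^k(4l+j−1), 2^k(4l+j))` of a quartile,
for `j = 1, 2, 3`. -/
def tile (P : Quartile) (j : ℕ) : Tile := ⟨P.k, P.n, 4*P.l + ((j - 1 : ℕ) : ℤ)⟩

end Quartile

/-- `T` is an `i`-tree with top `top`: `P_i ≤ top_i` for all `P ∈ T`. -/
def IsTree (i : ℕ) (top : Quartile) (T : Finset Quartile) : Prop :=
  ∀ P ∈ T, Tile.le (P.tile i) (top.tile i)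

/-- `size_j((a_P)_{P∈Ps})`: the sup over trees `T ⊆ Ps` which are `i`-trees for
some `i ≠ j` of `(|I_T|⁻¹ Σ_{P∈T} |a_{P_j}|²)^{1/2}`. -/
noncomputable def size (Ps : Finset Quartile) (j : ℕ) (a : Quartile → ℂ) : ℝ :=
  sSup ((fun p : Quartile × Finset Quartile =>
      Real.sqrt ((∑ P ∈ p.2, ‖a P‖^2) / p.1.len)) ''
    {p | p.2 ⊆ Ps ∧ ∃ i ∈ ({1,2,3} : Set ℕ), i ≠ j ∧ IsTree i p.1 p.2})

/-- `energy_j((a_P)_{P∈Ps})`: the sup over subsets `D ⊆ Ps` with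
`{P_j : P ∈ D}` pairwise disjoint of `(Σ_{P∈D} |a_{P_j}|²)^{1/2}`. -/
noncomputable def energy (Ps : Finset Quartile) (j : ℕ) (a : Quartile → ℂ) : ℝ :=
  sSup ((fun D : Finset Quartile => Real.sqrt (∑ P ∈ D, ‖a P‖^2)) ''
    {D | D ⊆ Ps ∧ ∀ P ∈ D, ∀ P' ∈ D, P ≠ P' →
      Disjoint (P.tile j).area (P'.tile j).area})

/-- The `L^{1,∞}(I)` quasinorm `sup_{λ>0} λ |{x ∈ I : |g(x)| > λ}|`. -/
noncomputable def weakL1 (g : ℝ → ℝ) (I : Set ℝ) : ℝ :=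
  sSup {r | ∃ lam : ℝ, 0 < lam ∧ r = lam * (volume {x ∈ I | lam < |g x|}).toReal}

/-- The square function `(Σ_{P∈T} |a_{P_j}|² χ_{I_P}/|I_P|)^{1/2}` of a tree. -/
noncomputable def treeFn (T : Finset Quartile) (a : Quartile → ℂ) : ℝ → ℝ :=
  fun x => Real.sqrt (∑ P ∈ T, ‖a P‖^2 * (P.I.indicator (fun _ => (1:ℝ)) x) / P.len)

def dyadicIco (k n : ℤ) : Set ℝ := Ico ((2:ℝ) ^ k * n) ((2:ℝ) ^ k * (n + 1))

section Dyadic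

variable {k n m a b : ℤ} {x : ℝ}

lemma mem_dyadicIco_iff : x ∈ dyadicIco k n ↔ ⌊x / 2 ^ k⌋ = n := by
  have h : (0:ℝ) < 2 ^ k := by positivity
  rw [Int.floor_eq_iff, le_div_iff₀ h, div_lt_iff₀ h, dyadicIco, mem_Ico, mul_comm (n : ℝ),
    mul_comm ((n : ℝ) + 1)]

lemma eq_of_mem_dyadicIco (hn : x ∈ dyadicIco k n) (hm : x ∈ dyadicIco k m) : n = m :=
  (mem_dyadicIco_iff.1 hn).symm.trans (mem_dyadicIco_iff.1 hm)

lemma mem_dyadicIco_add_iff (d : ℕ) :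
    x ∈ dyadicIco (k + d) m ↔ ⌊x / 2 ^ k⌋ / 2 ^ d = m := by
  have h : (2:ℝ) ^ (k + d) = 2 ^ k * ((2 ^ d : ℕ) : ℝ) := by
    rw [zpow_add₀ two_ne_zero, zpow_natCast]; push_cast; rfl
  rw [mem_dyadicIco_iff, h, ← div_div, Int.floor_div_natCast]
  push_cast; rfl

lemma dyadicIco_subset_ediv (k n : ℤ) (d : ℕ) : dyadicIco k n ⊆ dyadicIco (k + d) (n / 2 ^ d) :=
  fun _ hx ↦ (mem_dyadicIco_add_iff d).2 (by rw [mem_dyadicIco_iff.1 hx])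

lemma dyadicIco_subset_of_le (hab : a ≤ b) (hn : x ∈ dyadicIco a n) (hm : x ∈ dyadicIco b m) :
    dyadicIco a n ⊆ dyadicIco b m := by
  obtain ⟨d, rfl⟩ := Int.le.dest hab
  have hmn : n / 2 ^ d = m := by
    rw [← (mem_dyadicIco_add_iff d).1 hm, mem_dyadicIco_iff.1 hn]
  exact hmn ▸ dyadicIco_subset_ediv a n d

lemma le_of_dyadicIco_subset (h : dyadicIco a n ⊆ dyadicIco b m) : a ≤ b := by
  have ha : (0:ℝ) < 2 ^ a := by positivity
  obtain ⟨h₁, h₂⟩ := (Ico_subset_Ico_iff (by nlinarith)).1 h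
  have hlen : (2:ℝ) ^ a ≤ 2 ^ b := by nlinarith
  exact (zpow_le_zpow_iff_right₀ one_lt_two).1 hlen

lemma dyadicIco_ssubset_of_lt (hab : a < b) (hn : x ∈ dyadicIco a n) (hm : x ∈ dyadicIco b m) :
    dyadicIco a n ⊂ dyadicIco b m :=
  (dyadicIco_subset_of_le hab.le hn hm).ssubset_of_not_subset
    fun h ↦ hab.not_ge (le_of_dyadicIco_subset h)

lemma dyadicIco_four_mul_add_subset {c : ℤ} (hc₀ : 0 ≤ c) (hc₄ : c < 4) (l : ℤ) :
    dyadicIco k (4 * l + c) ⊆ dyadicIco (k + 2) l := by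
  have h := dyadicIco_subset_ediv k (4 * l + c) 2
  norm_num at h
  rwa [show (4 * l + c) / 4 = l by omega] at h

end Dyadic

namespace Tile

variable {p q : Tile} {x : ℝ}

lemma ξ_mem_freq (p : Tile) : p.ξ ∈ p.freq := by
  have h : (0:ℝ) < 2 ^ p.k := by positivity
  exact ⟨by rw [ξ]; nlinarith, by rw [ξ]; nlinarith⟩

lemma I_subset_of_le (h : p.le q) : p.I ⊆ q.I := by
  rcases h with h | rfl
  exacts [h.1.subset, subset_rfl]

lemma freq_subset_of_le (h : p.le q) : q.freq ⊆ p.freq := by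
  rcases h with h | rfl
  exacts [h.2, subset_rfl]

lemma k_le_of_le (h : p.le q) : q.k ≤ p.k :=
  neg_le_neg_iff.1 (le_of_dyadicIco_subset (I_subset_of_le h))

lemma ξ_mem_freq_of_le (h : p.le q) : q.ξ ∈ p.freq :=
  freq_subset_of_le h q.ξ_mem_freq

lemma I_ssubset_of_k_lt (hk : q.k < p.k) (hp : x ∈ p.I) (hq : x ∈ q.I) : p.I ⊂ q.I :=
  dyadicIco_ssubset_of_lt (neg_lt_neg hk) hp hq

lemma disjoint_area_of_k_eq (hk : p.k = q.k) (hne : p ≠ q) : Disjoint p.area q.area := by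
  rw [disjoint_iff_forall_ne]
  rintro ⟨x, y⟩ ⟨hxp, hyp⟩ _ ⟨hxq, hyq⟩ ⟨⟩
  obtain ⟨k, n, l⟩ := p
  obtain ⟨k', n', l'⟩ := q
  obtain rfl : k = k' := hk
  obtain rfl : n = n' := eq_of_mem_dyadicIco hxp hxq
  obtain rfl : l = l' := eq_of_mem_dyadicIco hyp hyq
  exact hne rfl

end Tile

namespace Quartile

def freq (P : Quartile) : Set ℝ := dyadicIco (P.k + 2) P.l

variable {P Q R S : Quartile} {i j : ℕ} {x y : ℝ}

@[simp] lemma tile_I (P : Quartile) (j : ℕ) : (P.tile j).I = P.I := rfl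

lemma tile_freq_subset (hj : j ≤ 4) (P : Quartile) : (P.tile j).freq ⊆ P.freq :=
  dyadicIco_four_mul_add_subset (Int.natCast_nonneg _) (by omega) P.l

lemma freq_subset_of_tile_le (hi : i ≤ 4) (h : (P.tile i).le (Q.tile i)) : Q.freq ⊆ P.freq :=
  dyadicIco_subset_of_le (by have := Tile.k_le_of_le h; simp only [tile] at this; omega)
    (tile_freq_subset hi Q (Q.tile i).ξ_mem_freq)
    (tile_freq_subset hi P (Tile.ξ_mem_freq_of_le h))

lemma freq_subset_tile_freq (hj : j ≤ 4) (hk : Q.k + 2 ≤ P.k) (hy : y ∈ (P.tile j).freq)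
    (hy' : y ∈ (Q.tile j).freq) : Q.freq ⊆ (P.tile j).freq :=
  dyadicIco_subset_of_le hk (tile_freq_subset hj Q hy') hy

-- `1 ≤ i` because the offset `i - 1` in `Quartile.tile` is truncated: tiles `0` and `1` coincide.
lemma lt_of_mem_tile_freq (hi : 1 ≤ i) (hij : i < j) (hx : x ∈ (P.tile i).freq)
    (hy : y ∈ (P.tile j).freq) : x < y := by
  have hc : 4 * P.l + ((i - 1 : ℕ) : ℤ) + 1 ≤ 4 * P.l + ((j - 1 : ℕ) : ℤ) := by omega
  calc x < 2 ^ P.k * (((4 * P.l + ((i - 1 : ℕ) : ℤ) : ℤ) : ℝ) + 1) := hx.2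
    _ ≤ 2 ^ P.k * ((4 * P.l + ((j - 1 : ℕ) : ℤ) : ℤ) : ℝ) := by gcongr; exact_mod_cast hc
    _ ≤ y := hy.1

lemma tile_lt_of_tile_le (hi : i ≤ 4) (hj : j ≤ 4) (hk : Q.k + 2 ≤ P.k)
    (hQR : (Q.tile i).le (R.tile i)) (hx : x ∈ P.I) (hx' : x ∈ Q.I)
    (hy : y ∈ (P.tile j).freq) (hy' : y ∈ (Q.tile j).freq) : (P.tile j).lt (R.tile j) := by
  refine ⟨?_, fun z hz ↦ ?_⟩
  · calc (P.tile j).I ⊂ (Q.tile j).I := Tile.I_ssubset_of_k_lt (by simp only [tile]; omega) hx hx'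
      _ ⊆ (R.tile j).I := by simpa only [tile_I] using Tile.I_subset_of_le hQR
  · exact freq_subset_tile_freq hj hk hy hy'
      (freq_subset_of_tile_le hi hQR (tile_freq_subset hj R hz))

lemma ξ_tile_lt_of_tile_le (hi : 1 ≤ i) (hij : i < j) (hj : j ≤ 4) (hk : Q.k + 2 ≤ P.k)
    (hPR : (P.tile i).le (R.tile i)) (hQS : (Q.tile i).le (S.tile i))
    (hy : y ∈ (P.tile j).freq) (hy' : y ∈ (Q.tile j).freq) : (R.tile i).ξ < (S.tile i).ξ :=
  lt_of_mem_tile_freq hi hij (Tile.ξ_mem_freq_of_le hPR)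
    (freq_subset_tile_freq hj hk hy hy'
      (tile_freq_subset (by omega) Q (Tile.ξ_mem_freq_of_le hQS)))

end Quartile

theorem tree_selection_disjoint_general (i j : ℕ)
    (hi : i ∈ ({1,2,3} : Set ℕ)) (hj : j ∈ ({1,2,3} : Set ℕ)) (hij : i < j)
    (N : ℕ) (top : Fin N → Quartile) (T : Fin N → Finset Quartile)
    (heven : ∀ m, ∀ P ∈ T m, Even P.k)
    (htree : ∀ m, IsTree i (top m) (T m))
    (hgreedy : ∀ m m' : Fin N,
      Tile.ξ ((top m').tile i) < Tile.ξ ((top m).tile i) → m ≤ m')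
    (hremove : ∀ m m' : Fin N, m < m' → ∀ P' ∈ T m',
      ¬ Tile.lt (P'.tile j) ((top m).tile j)) :
    ∀ m m' : Fin N, ∀ P ∈ T m, ∀ P' ∈ T m', P.tile j ≠ P'.tile j →
      Disjoint ((P.tile j).area) ((P'.tile j).area) := by
  have hi₁ : 1 ≤ i := by simp only [mem_insert_iff, mem_singleton_iff] at hi; omega
  have hj₄ : j ≤ 4 := by simp only [mem_insert_iff, mem_singleton_iff] at hj; omega
  have key : ∀ m m' : Fin N, ∀ P ∈ T m, ∀ Q ∈ T m', Q.k < P.k →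
      Disjoint (P.tile j).area (Q.tile j).area := by
    intro m m' P hP Q hQ hk
    rw [disjoint_iff_forall_ne]
    rintro ⟨x, y⟩ ⟨hxP, hyP⟩ _ ⟨hxQ, hyQ⟩ ⟨⟩
    have hk₂ : Q.k + 2 ≤ P.k := by
      obtain ⟨a, ha⟩ := heven m P hP
      obtain ⟨b, hb⟩ := heven m' Q hQ
      omega
    have hξ :=
      Quartile.ξ_tile_lt_of_tile_le hi₁ hij hj₄ hk₂ (htree m P hP) (htree m' Q hQ) hyP hyQ
    have hm : m' < m := (hgreedy m' m hξ).lt_of_ne (by rintro rfl; exact hξ.false)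
    exact hremove m' m hm P hP
      (Quartile.tile_lt_of_tile_le (by omega) hj₄ hk₂ (htree m' Q hQ) hxP hxQ hyP hyQ)
  intro m m' P hP P' hP' hne
  rcases lt_trichotomy P.k P'.k with hk | hk | hk
  · exact (key m' m P' hP' P hP hk).symm
  · exact Tile.disjoint_area_of_k_eq hk hne
  · exact key m m' P hP P' hP' hk

/-- geometric disjointness in the greedy tree selection.
The trees `T 0, T 1, …` are `i`-trees with tops `top 0, top 1, …` listed in
order of selection; all time-interval lengths are even powers of `2`;
the frequency centers `ξ` of the tops are chosen greedily maximal (so a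
strictly larger center means an earlier selection); and when a tree is
selected, every quartile `P'` with `P'_j < (top)_j` is removed (so no later
tree contains such a quartile).  Then the tiles
`{P_j : P ∈ T m for some m}` are pairwise disjoint. -/
theorem tree_selection_disjoint (i j : ℕ)
    (hi : i ∈ ({1,2,3} : Set ℕ)) (hj : j ∈ ({1,2,3} : Set ℕ)) (hij : i < j)
    (N : ℕ) (top : Fin N → Quartile) (T : Fin N → Finset Quartile)
    (heven : ∀ m, ∀ P ∈ T m, Even P.k)
    (heventop : ∀ m, Even (top m).k)
    (htree : ∀ m, IsTree i (top m) (T m))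
    (hgreedy : ∀ m m' : Fin N,
      Tile.ξ ((top m').tile i) < Tile.ξ ((top m).tile i) → m ≤ m')
    (hremove : ∀ m m' : Fin N, m < m' → ∀ P' ∈ T m',
      ¬ Tile.lt (P'.tile j) ((top m).tile j)) :
    ∀ m m' : Fin N, ∀ P ∈ T m, ∀ P' ∈ T m', P.tile j ≠ P'.tile j →
      Disjoint ((P.tile j).area) ((P'.tile j).area) :=
  tree_selection_disjoint_general i j hi hj hij N top T heven htree hgreedy hremove
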